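/- Let α > 2, β ≥ 0, c > 0, N ∈ ℕ, and let 𝒩 = (𝒩_{jk})_{j,k∈ℤ} satisfy |𝒩_{jk}| ≤ c e^{-β|j-k|}/(⟨j⟩⟨k⟩⟨j-k⟩^{α-1}) for all j ≠ ±k. Let (û_{k'k})_{-N≤k',k≤N} be a unitary (2N+1)×(2N+1) matrix. Then for |j| > N and |k| ≤ N, |∑_{k'=-N}^{N} 𝒩_{jk'} û_{k'k}|² ≤ c² c₂ e^{-2β(|j|-N)} / ⟨j⟩⁴, where c₂ is the constant from the convolution lemma with exponent ν = 2. -/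

import Mathlib

/-- ⟨k⟩ = |k| + 1 -/
noncomputable def br (k : ℤ) : ℝ := |(k : ℝ)| + 1

/-!
Cauchy–Schwarz against the unit column `û_{·k}` bounds the square of the sum by
`∑_{|k'| ≤ N} |𝒩 j k'|²`. As `|k'| ≤ N < |j|`, these entries lie off the diagonals `k' = ±j`, so the
decay hypothesis applies, and `|j - k'| ≥ |j| - N` turns its exponential into `e^{-β(|j| - N)}`.
What remains is `c² e^{-2β(|j| - N)} ⟨j⟩⁻²` times a partial sum of the convolution series, which is
at most `c₂ ⟨j⟩⁻²`.
-/

open Finset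

lemma br_pos (k : ℤ) : 0 < br k := by
  unfold br
  positivity

lemma one_le_br (k : ℤ) : 1 ≤ br k :=
  le_add_of_nonneg_left (abs_nonneg _)

lemma summable_one_div_br_sq : Summable fun k : ℤ => 1 / br k ^ 2 := by
  refine (Real.summable_one_div_int_pow.mpr one_lt_two).of_norm_bounded_eventually ?_
  filter_upwards [Filter.eventually_cofinite_ne 0] with k hk0
  have hk : (0 : ℝ) < (k : ℝ) ^ 2 := by positivity
  rw [Real.norm_of_nonneg (one_div_nonneg.mpr (sq_nonneg _))]
  refine one_div_le_one_div_of_le hk ?_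
  rw [← sq_abs]
  unfold br
  gcongr
  linarith

noncomputable def convWeight (α : ℝ) (j k : ℤ) : ℝ :=
  1 / (br k ^ 2 * br (j - k) ^ (2 * α - 2))

lemma convWeight_nonneg (α : ℝ) (j k : ℤ) : 0 ≤ convWeight α j k := by
  have := br_pos k
  have := br_pos (j - k)
  unfold convWeight
  positivity

lemma summable_convWeight {α : ℝ} (hα : 1 ≤ α) (j : ℤ) : Summable (convWeight α j) := by
  refine summable_one_div_br_sq.of_nonneg_of_le (convWeight_nonneg α j) fun k => ?_
  have := br_pos k
  unfold convWeight
  gcongr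
  exact le_mul_of_one_le_right (sq_nonneg _) (Real.one_le_rpow (one_le_br _) (by linarith))

lemma Matrix.sum_norm_sq_col_eq_one_of_mem_unitaryGroup {n 𝕜 : Type*} [Fintype n]
    [DecidableEq n] [RCLike 𝕜] {U : Matrix n n 𝕜} (hU : U ∈ Matrix.unitaryGroup n 𝕜) (k : n) :
    ∑ i, ‖U i k‖ ^ 2 = 1 := by
  have h : (star U * U) k k = 1 := by rw [Matrix.mem_unitaryGroup_iff'.mp hU, Matrix.one_apply_eq]
  simp only [Matrix.star_eq_conjTranspose, Matrix.mul_apply, Matrix.conjTranspose_apply,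
    RCLike.star_def, RCLike.conj_mul] at h
  exact_mod_cast h

lemma norm_sum_mul_sq_le {ι R : Type*} [SeminormedRing R] (s : Finset ι) (f g : ι → R) :
    ‖∑ i ∈ s, f i * g i‖ ^ 2 ≤ (∑ i ∈ s, ‖f i‖ ^ 2) * ∑ i ∈ s, ‖g i‖ ^ 2 :=
  calc ‖∑ i ∈ s, f i * g i‖ ^ 2 ≤ (∑ i ∈ s, ‖f i‖ * ‖g i‖) ^ 2 := by
        gcongr
        exact (norm_sum_le _ _).trans (sum_le_sum fun i _ => norm_mul_le _ _)
    _ ≤ (∑ i ∈ s, ‖f i‖ ^ 2) * ∑ i ∈ s, ‖g i‖ ^ 2 := sum_mul_sq_le_sq_mul_sq s _ _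

lemma norm_sum_mul_unitary_col_sq_le {n 𝕜 : Type*} [Fintype n] [DecidableEq n] [RCLike 𝕜]
    {U : Matrix n n 𝕜} (hU : U ∈ Matrix.unitaryGroup n 𝕜) (a : n → 𝕜) (k : n) :
    ‖∑ i, a i * U i k‖ ^ 2 ≤ ∑ i, ‖a i‖ ^ 2 := by
  simpa [Matrix.sum_norm_sq_col_eq_one_of_mem_unitaryGroup hU k] using
    norm_sum_mul_sq_le univ a (U · k)

lemma exp_neg_mul_abs_sub_sq_le {β N x y : ℝ} (hβ : 0 ≤ β) (hy : |y| ≤ N) :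
    Real.exp (-β * |x - y|) ^ 2 ≤ Real.exp (-2 * β * (|x| - N)) := by
  rw [sq, ← Real.exp_add, Real.exp_le_exp]
  nlinarith [abs_sub_abs_le_abs_sub x y]

lemma sq_le_mul_convWeight_of_le_decay {α β c N r : ℝ} {j k : ℤ} (hβ : 0 ≤ β) (hk : |(k : ℝ)| ≤ N)
    (hr : 0 ≤ r)
    (h : r ≤ c * Real.exp (-β * |((j - k : ℤ) : ℝ)|) / (br j * br k * br (j - k) ^ (α - 1))) :
    r ^ 2 ≤ c ^ 2 * Real.exp (-2 * β * (|(j : ℝ)| - N)) / br j ^ 2 * convWeight α j k := by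
  have hrpow : (br (j - k) ^ (α - 1)) ^ 2 = br (j - k) ^ (2 * α - 2) := by
    rw [← Real.rpow_natCast, ← Real.rpow_mul (br_pos _).le]
    ring_nf
  have := convWeight_nonneg α j k
  calc r ^ 2
      ≤ (c * Real.exp (-β * |((j - k : ℤ) : ℝ)|) / (br j * br k * br (j - k) ^ (α - 1))) ^ 2 :=
        pow_le_pow_left₀ hr h 2
    _ = c ^ 2 * Real.exp (-β * |((j - k : ℤ) : ℝ)|) ^ 2 / br j ^ 2 * convWeight α j k := by
        rw [convWeight, ← hrpow]
        ring
    _ ≤ c ^ 2 * Real.exp (-2 * β * (|(j : ℝ)| - N)) / br j ^ 2 * convWeight α j k := by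
        gcongr
        push_cast
        exact exp_neg_mul_abs_sub_sq_le hβ hk

theorem offblock_bound_general (α β c c₂ : ℝ) (hα : 2 < α) (hβ : 0 ≤ β) (N : ℕ)
    (𝒩 : ℤ → ℤ → ℂ)
    (h𝒩 : ∀ j k : ℤ, j ≠ k → j ≠ -k →
      ‖𝒩 j k‖ ≤ c * Real.exp (-β * |((j - k : ℤ) : ℝ)|) /
        (br j * br k * br (j - k) ^ (α - 1)))
    (hc₂ : ∀ j : ℤ, ∑' k' : ℤ, 1 / (br k' ^ 2 * br (j - k') ^ (2 * α - 2)) ≤ c₂ / br j ^ 2)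
    (Uh : Matrix (Finset.Icc (-(N : ℤ)) (N : ℤ)) (Finset.Icc (-(N : ℤ)) (N : ℤ)) ℂ)
    (hUh : Uh ∈ Matrix.unitaryGroup (Finset.Icc (-(N : ℤ)) (N : ℤ)) ℂ) :
    ∀ j : ℤ, (N : ℤ) < |j| → ∀ k : Finset.Icc (-(N : ℤ)) (N : ℤ),
      ‖∑ k' : Finset.Icc (-(N : ℤ)) (N : ℤ), 𝒩 j k'.val * Uh k' k‖ ^ 2
        ≤ c ^ 2 * c₂ * Real.exp (-2 * β * (|(j : ℝ)| - N)) / br j ^ 4 := by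
  intro j hj k
  set C := c ^ 2 * Real.exp (-2 * β * (|(j : ℝ)| - N)) / br j ^ 2 with hC_def
  have hentry (k' : Finset.Icc (-(N : ℤ)) (N : ℤ)) : ‖𝒩 j k'‖ ^ 2 ≤ C * convWeight α j k' := by
    have hk' : |(k' : ℤ)| ≤ N := abs_le.mpr (mem_Icc.mp k'.2)
    have hne : j ≠ k' := by rintro rfl; exact hk'.not_gt hj
    have hne' : j ≠ -k' := by rintro rfl; rw [abs_neg] at hj; exact hk'.not_gt hj
    exact sq_le_mul_convWeight_of_le_decay hβ (by exact_mod_cast hk') (norm_nonneg _)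
      (h𝒩 j k' hne hne')
  have hC : 0 ≤ C := by have := br_pos j; positivity
  calc ‖∑ k' : Finset.Icc (-(N : ℤ)) (N : ℤ), 𝒩 j k'.val * Uh k' k‖ ^ 2
      ≤ ∑ k' : Finset.Icc (-(N : ℤ)) (N : ℤ), ‖𝒩 j k'‖ ^ 2 :=
        norm_sum_mul_unitary_col_sq_le hUh _ k
    _ ≤ ∑ k' : Finset.Icc (-(N : ℤ)) (N : ℤ), C * convWeight α j k' :=
        sum_le_sum fun k' _ => hentry k'
    _ = C * ∑ k' ∈ Finset.Icc (-(N : ℤ)) (N : ℤ), convWeight α j k' := by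
        rw [← mul_sum, sum_coe_sort _ (convWeight α j)]
    _ ≤ C * ∑' k', convWeight α j k' := by
        gcongr
        exact (summable_convWeight (by linarith) j).sum_le_tsum _
          fun k' _ => convWeight_nonneg α j k'
    _ ≤ C * (c₂ / br j ^ 2) := by gcongr; exact hc₂ j
    _ = c ^ 2 * c₂ * Real.exp (-2 * β * (|(j : ℝ)| - N)) / br j ^ 4 := by
        have := (br_pos j).ne'
        rw [hC_def]
        field_simp

theorem offblock_bound (α β c c₂ : ℝ) (hα : 2 < α) (hβ : 0 ≤ β) (hc : 0 < c) (N : ℕ)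
    (𝒩 : ℤ → ℤ → ℂ)
    (h𝒩 : ∀ j k : ℤ, j ≠ k → j ≠ -k →
      ‖𝒩 j k‖ ≤ c * Real.exp (-β * |((j - k : ℤ) : ℝ)|) /
        (br j * br k * br (j - k) ^ (α - 1)))
    (hc₂ : ∀ j : ℤ, ∑' k' : ℤ, 1 / (br k' ^ 2 * br (j - k') ^ (2 * α - 2)) ≤ c₂ / br j ^ 2)
    (Uh : Matrix (Finset.Icc (-(N : ℤ)) (N : ℤ)) (Finset.Icc (-(N : ℤ)) (N : ℤ)) ℂ)
    (hUh : Uh ∈ Matrix.unitaryGroup (Finset.Icc (-(N : ℤ)) (N : ℤ)) ℂ) :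
    ∀ j : ℤ, (N : ℤ) < |j| → ∀ k : Finset.Icc (-(N : ℤ)) (N : ℤ),
      ‖∑ k' : Finset.Icc (-(N : ℤ)) (N : ℤ), 𝒩 j k'.val * Uh k' k‖ ^ 2
        ≤ c ^ 2 * c₂ * Real.exp (-2 * β * (|(j : ℝ)| - N)) / br j ^ 4 :=
  offblock_bound_general α β c c₂ hα hβ N 𝒩 h𝒩 hc₂ Uh hUh
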